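/- arXiv:2506.15490 — 3 statements merged into one kernel-verified Lean document; each statement's English description precedes it below -/
import Mathlib

section
/- Let d and j be integers with 1 ≤ j ≤ d. For each i with 0 ≤ i ≤ d − j, let v_i ∈ (ZMod 2)^d be the indicator vector of the window {i, i+1, …, i+j−1} (that is, (v_i)_t = 1 if i ≤ t ≤ i+j−1 and (v_i)_t = 0 otherwise), and let 𝟙 ∈ (ZMod 2)^d be the all-ones vector. Then 𝟙 lies in the F₂-linear span of {v_0, v_1, …, v_{d−j}} if and only if j divides d. -/
/-- The indicator vector in `(ZMod 2)^d` of the window `{i, i+1, …, i+j-1}`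
of `j` consecutive positions starting at `i`. -/
def window (d j i : ℕ) : Fin d → ZMod 2 :=
  fun t => if i ≤ (t : ℕ) ∧ (t : ℕ) ≤ i + j - 1 then 1 else 0

/-!
If `j ∣ d`, the windows starting at the multiples of `j` tile the line. Conversely, every window
meets each residue class mod `j` in exactly one position, so the functional summing the
coordinates in the residue classes of `0` and of `d % j` vanishes on every window. When `j ∤ d`
these classes have `d / j + 1` and `d / j` elements, so the functional takes the value `1` on `𝟙`.
-/

open Finset Submodule

theorem Nat.card_Ico_add_self_filter_modEq {r : ℕ} (hr : 0 < r) (a v : ℕ) :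
    #{x ∈ Ico a (a + r) | x ≡ v [MOD r]} = 1 := by
  have h := Nat.Ico_filter_modEq_card a (a + r) hr v
  push_cast at h
  rw [add_sub_right_comm, add_div, div_self (by positivity), Int.ceil_add_one] at h
  simpa using h

theorem window_eq_indicator {d j : ℕ} (hj : 0 < j) (i : ℕ) :
    window d j i = (Fin.val ⁻¹' Set.Ico i (i + j)).indicator 1 := by
  classical
  funext t
  simp only [window, Set.indicator_apply, Set.mem_preimage, Set.mem_Ico, Pi.one_apply]
  congr 1
  exact propext (by omega)

theorem sum_window_mul_eq_indicator {d j : ℕ} (hj : 0 < j) (q : ℕ) :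
    ∑ k ∈ range q, window d j (k * j) = (Fin.val ⁻¹' Set.Iio (q * j)).indicator 1 := by
  induction q with
  | zero => ext; simp
  | succ q ih =>
    have hsplit : Set.Iio ((q + 1) * j) = Set.Iio (q * j) ∪ Set.Ico (q * j) (q * j + j) := by
      rw [← Set.Ico_bot, ← Set.Ico_bot, Set.Ico_union_Ico_eq_Ico (by simp) (by omega), add_mul,
        one_mul]
    have hdisj : Disjoint (Set.Iio (q * j)) (Set.Ico (q * j) (q * j + j)) :=
      (Set.Iio_disjoint_Ici le_rfl).mono_right Set.Ico_subset_Ici_self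
    rw [sum_range_succ, ih, window_eq_indicator hj, hsplit, Set.preimage_union,
      Set.indicator_union_of_disjoint (hdisj.preimage _)]
    rfl

section residueSum

variable (R : Type*) [CommSemiring R]

def residueSum (d j s : ℕ) : (Fin d → R) →ₗ[R] R :=
  ∑ t ∈ univ.filter (fun t : Fin d => (t : ℕ) ≡ s [MOD j]), LinearMap.proj (φ := fun _ => R) t

theorem residueSum_indicator {d : ℕ} (j s : ℕ) {S : Finset ℕ} (hS : S ⊆ range d) :
    residueSum R d j s ((Fin.val ⁻¹' S).indicator 1) = #{x ∈ S | x ≡ s [MOD j]} := by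
  classical
  simp only [residueSum, LinearMap.sum_apply, LinearMap.coe_proj, Function.eval,
    Set.indicator_apply, Set.mem_preimage, mem_coe, Pi.one_apply]
  rw [sum_filter, Fin.sum_univ_eq_sum_range
    (fun t => if t ≡ s [MOD j] then if t ∈ S then (1 : R) else 0 else 0)]
  simp only [← ite_and, sum_boole]
  congr 2
  ext x
  simp only [mem_filter, mem_range]
  constructor
  · rintro ⟨-, h, hx⟩
    exact ⟨hx, h⟩
  · rintro ⟨hx, h⟩
    exact ⟨mem_range.1 (hS hx), h, hx⟩

theorem residueSum_one {d j : ℕ} (s : ℕ) (hj : 0 < j) :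
    residueSum R d j s 1 = ((d / j + if s % j < d % j then 1 else 0 : ℕ) : R) := by
  have hone : (1 : Fin d → R) = (Fin.val ⁻¹' (range d : Set ℕ)).indicator 1 := by
    ext t
    simp
  rw [hone, residueSum_indicator R j s subset_rfl, ← Nat.count_eq_card_filter_range,
    Nat.count_modEq_card _ hj]

theorem residueSum_window {d j i : ℕ} (s : ℕ) (hj : 0 < j) (hij : i + j ≤ d) :
    residueSum (ZMod 2) d j s (window d j i) = 1 := by
  rw [window_eq_indicator hj, ← coe_Ico, residueSum_indicator _ _ _ ?_,
    Nat.card_Ico_add_self_filter_modEq hj, Nat.cast_one]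
  intro x hx
  simp only [mem_Ico, mem_range] at hx ⊢
  omega

end residueSum

theorem one_mem_span_windows_of_dvd {d j : ℕ} (hj : 0 < j) (hdvd : j ∣ d) :
    (1 : Fin d → ZMod 2) ∈ span (ZMod 2) {x | ∃ i ≤ d - j, x = window d j i} := by
  obtain ⟨q, rfl⟩ := hdvd
  have hone : (1 : Fin (j * q) → ZMod 2) = ∑ k ∈ range q, window (j * q) j (k * j) := by
    rw [sum_window_mul_eq_indicator hj, mul_comm q j]
    ext t
    simp
  rw [hone]
  refine sum_mem fun k hk => subset_span ⟨k * j, Nat.le_sub_of_add_le ?_, rfl⟩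
  calc k * j + j = (k + 1) * j := by ring
    _ ≤ q * j := Nat.mul_le_mul_right j (mem_range.1 hk)
    _ = j * q := mul_comm q j

theorem dvd_of_one_mem_span_windows {d j : ℕ} (hj : 0 < j) (hjd : j ≤ d)
    (hone : (1 : Fin d → ZMod 2) ∈ span (ZMod 2) {x | ∃ i ≤ d - j, x = window d j i}) :
    j ∣ d := by
  by_contra hnd
  have hr : 0 < d % j := Nat.pos_of_ne_zero (mt Nat.dvd_of_mod_eq_zero hnd)
  set L := residueSum (ZMod 2) d j 0 + residueSum (ZMod 2) d j (d % j)
  have hker : span (ZMod 2) {x | ∃ i ≤ d - j, x = window d j i} ≤ LinearMap.ker L := by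
    refine span_le.2 ?_
    rintro _ ⟨i, hi, rfl⟩
    simp only [SetLike.mem_coe, LinearMap.mem_ker, L, LinearMap.add_apply,
      residueSum_window _ hj (by omega : i + j ≤ d), CharTwo.add_self_eq_zero]
  have hL : L 1 = 1 := by
    simp only [L, LinearMap.add_apply, residueSum_one _ _ hj, Nat.zero_mod, hr, Nat.mod_mod,
      lt_irrefl, if_true, if_false, add_zero]
    push_cast
    rw [add_right_comm, CharTwo.add_self_eq_zero, zero_add]
  exact one_ne_zero (hL.symm.trans (hker hone))

/-- The all-ones vector `𝟙` lies in the `F₂`-span of the window vectors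
`v_0, …, v_{d-j}` if and only if `j` divides `d`. -/
theorem allOnes_mem_span_windows_iff_dvd (d j : ℕ) (hj : 1 ≤ j) (hjd : j ≤ d) :
    ((fun _ => 1 : Fin d → ZMod 2) ∈
      Submodule.span (ZMod 2) {x : Fin d → ZMod 2 | ∃ i ≤ d - j, x = window d j i}) ↔
    j ∣ d :=
  ⟨dvd_of_one_mem_span_windows hj hjd, one_mem_span_windows_of_dvd hj⟩
end

section
/- Let d and j be integers with 1 ≤ j ≤ d and j ∣ d. For each i with 0 ≤ i ≤ d − j, let v_i ∈ (ZMod 2)^d be the indicator vector of the window {i, i+1, …, i+j−1}, and let 𝟙 ∈ (ZMod 2)^d be the all-ones vector. Then 𝟙 = v_0 + v_j + v_{2j} + ⋯ + v_{d−j} (the sum over the d/j windows starting at multiples of j), and this is the unique way to write 𝟙 as an F₂-linear combination of v_0, …, v_{d−j}. -/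
/-!
Position `t` lies in the window starting at `r * j` exactly when `r = t / j`, so the windows at
multiples of `j` tile the line. Uniqueness holds because the windows are triangular: `v_i` is `1`
at position `i` and vanishes before it, so `v_0, …, v_{d-j}` are linearly independent.
-/

theorem linearIndependent_of_triangular {ι κ R : Type*} [Fintype ι] [LinearOrder ι] [Ring R]
    [NoZeroDivisors R] (v : ι → κ → R) (p : ι → κ) (hdiag : ∀ i, v i (p i) ≠ 0)
    (hlower : ∀ i k, i < k → v k (p i) = 0) : LinearIndependent R v := by
  rw [Fintype.linearIndependent_iff]
  intro g hg i
  induction i using WellFoundedLT.induction with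
  | _ i ih =>
    have hpivot := congrFun hg (p i)
    rw [Finset.sum_apply, Finset.sum_eq_single i] at hpivot
    · simpa [hdiag i] using hpivot
    · intro k _ hki
      rcases lt_or_gt_of_ne hki with hlt | hgt
      · simp [ih k hlt]
      · simp [hlower i k hgt]
    · simp

theorem window_apply_of_lt {d j i : ℕ} {t : Fin d} (ht : (t : ℕ) < i) : window d j i t = 0 :=
  if_neg (by omega)

theorem window_apply_self {d j : ℕ} (hj : 0 < j) (t : Fin d) : window d j t t = 1 :=
  if_pos (by omega)

theorem window_mul_apply {d j : ℕ} (hj : 0 < j) (r : ℕ) (t : Fin d) :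
    window d j (r * j) t = if (t : ℕ) / j = r then 1 else 0 := by
  simp only [window, Nat.div_eq_iff hj]

theorem linearIndependent_window {d j : ℕ} (hj : 0 < j) (hjd : j ≤ d) :
    LinearIndependent (ZMod 2) (fun i : Fin (d - j + 1) => window d j i) :=
  linearIndependent_of_triangular _ (Fin.castLE (by omega))
    (fun i => (window_apply_self hj (Fin.castLE _ i)).trans_ne one_ne_zero) (fun _ _ hik => window_apply_of_lt hik)

theorem sum_window_mul_eq_one {d j : ℕ} (hj : 0 < j) (hdvd : j ∣ d) :
    ∑ r ∈ Finset.range (d / j), window d j (r * j) = 1 := by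
  funext t
  have hmem : (t : ℕ) / j ∈ Finset.range (d / j) :=
    Finset.mem_range.mpr (Nat.div_lt_div_of_lt_of_dvd hdvd t.2)
  simp [Finset.sum_apply, window_mul_apply hj, hmem]

/-- `(n + j - 1) / j` is `⌈n / j⌉`, the number of multiples of `j` below `n`. -/
theorem Finset.sum_filter_dvd_range {M : Type*} [AddCommMonoid M] (f : ℕ → M) {j : ℕ}
    (hj : 0 < j) (n : ℕ) :
    ∑ i ∈ Finset.range n with j ∣ i, f i = ∑ r ∈ Finset.range ((n + j - 1) / j), f (r * j) := by
  have hlt (r : ℕ) : r < (n + j - 1) / j ↔ r * j < n := by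
    rw [Nat.lt_div_iff_mul_lt hj]; omega
  symm
  refine Finset.sum_nbij' (· * j) (· / j) ?_ ?_ ?_ ?_ (fun _ _ => rfl)
  · intro r hr
    simp only [Finset.mem_range, Finset.mem_filter] at hr ⊢
    exact ⟨(hlt r).1 hr, dvd_mul_left j r⟩
  · rintro _ hi
    obtain ⟨hi, k, rfl⟩ := Finset.mem_filter.mp hi
    simpa [Nat.mul_div_cancel_left k hj, hlt, mul_comm] using hi
  · intro r _
    exact Nat.mul_div_cancel r hj
  · intro i hi
    exact Nat.div_mul_cancel (Finset.mem_filter.mp hi).2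

/-- When `j ∣ d`, the all-ones vector is the sum of the `d/j` disjoint windows
starting at multiples of `j`, and this is the unique `F₂`-linear combination of
`v_0, …, v_{d-j}` equal to the all-ones vector: the coefficient of `v_i` is `1`
exactly when `j ∣ i`. -/
theorem allOnes_eq_sum_tiling_windows_unique (d j : ℕ) (hj : 1 ≤ j) (hjd : j ≤ d)
    (hdvd : j ∣ d) :
    ((fun _ => 1 : Fin d → ZMod 2) = ∑ r ∈ Finset.range (d / j), window d j (r * j)) ∧
    (∀ c : Fin (d - j + 1) → ZMod 2,
      (∑ i : Fin (d - j + 1), c i • window d j (i : ℕ)) = (fun _ => 1 : Fin d → ZMod 2) →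
      ∀ i : Fin (d - j + 1), c i = if j ∣ (i : ℕ) then 1 else 0) := by
  have htile := sum_window_mul_eq_one hj hdvd
  refine ⟨htile.symm, fun c hc => ?_⟩
  have hcanonical : ∑ i : Fin (d - j + 1),
      (if j ∣ (i : ℕ) then 1 else 0 : ZMod 2) • window d j i = 1 := by
    rw [Fin.sum_univ_eq_sum_range (fun i => (if j ∣ i then 1 else 0 : ZMod 2) • window d j i)]
    simp only [ite_smul, one_smul, zero_smul]
    rw [← Finset.sum_filter, Finset.sum_filter_dvd_range _ hj,
      show (d - j + 1 + j - 1) / j = d / j by congr 1; omega, htile]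
  exact Fintype.linearIndependent_iffₛ.1 (linearIndependent_window hj hjd) c _
    (hc.trans hcanonical.symm)
end

section
/- Let d and j be integers with 1 ≤ j ≤ d. For each i with 0 ≤ i ≤ d − j, let v_i ∈ (ZMod 2)^d be the indicator vector of the window {i, i+1, …, i+j−1}, and let 𝟙 ∈ (ZMod 2)^d be the all-ones vector. Under the F₂-linear identification of (ZMod 2)^d with polynomials over ZMod 2 of degree < d (sending the t-th standard basis vector to X^t), the vector 𝟙 lies in the span of {v_0, …, v_{d−j}} if and only if σ_j = 1 + X + ⋯ + X^{j−1} divides σ_d = 1 + X + ⋯ + X^{d−1} in (ZMod 2)[X]. -/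
/-!
Φ sends the window starting at `i` to `X^i σ_j` and the all-ones vector to `σ_d`, so the span of
the windows is `σ_j` times the polynomials of degree at most `d - j`. Conversely, over the domain
`𝔽₂[X]` any factorization `σ_d = σ_j q` has `deg q = (d - 1) - (j - 1) = d - j`, so divisibility
already gives membership.
-/

open Polynomial

namespace Polynomial

variable {R : Type*}

theorem natDegree_geom_sum_X [CommRing R] [IsDomain R] {n : ℕ} (hn : n ≠ 0) :
    (∑ i ∈ Finset.range n, (X : R[X]) ^ i).natDegree = n - 1 := by
  have h := congrArg natDegree (geom_sum_mul (X : R[X]) n)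
  rw [← C_1, natDegree_mul (monic_geom_sum_X hn).ne_zero (X_sub_C_ne_zero 1), natDegree_X_sub_C,
    natDegree_X_pow_sub_C] at h
  omega

theorem span_X_pow_image_Iic_eq_degreeLE [Semiring R] (n : ℕ) :
    Submodule.span R ((fun i => (X : R[X]) ^ i) '' Set.Iic n) = degreeLE R n := by
  classical
  rw [degreeLE_eq_span_X_pow, Finset.coe_image, Finset.coe_range, Set.Iio_add_one_eq_Iic]

theorem mem_span_X_pow_mul_iff_dvd [CommRing R] [IsDomain R] {p f : R[X]} {n : ℕ}
    (hf : f.natDegree = p.natDegree + n) :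
    f ∈ Submodule.span R ((fun i => X ^ i * p) '' Set.Iic n) ↔ p ∣ f := by
  have hspan : Submodule.span R ((fun i => X ^ i * p) '' Set.Iic n) =
      (degreeLE R n).map (LinearMap.mulRight R p) := by
    rw [← span_X_pow_image_Iic_eq_degreeLE, ← Submodule.span_image, Set.image_image]
    rfl
  rw [hspan]
  constructor
  · rintro ⟨q, -, rfl⟩
    exact dvd_mul_left p q
  · rintro ⟨q, rfl⟩
    rcases eq_or_ne (p * q) 0 with hpq | hpq
    · exact hpq ▸ zero_mem _
    rw [natDegree_mul (left_ne_zero_of_mul hpq) (right_ne_zero_of_mul hpq)] at hf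
    exact ⟨q, mem_degreeLE.2 (degree_le_of_natDegree_le (by omega)), mul_comm q p⟩

end Polynomial

section Identification

variable {R : Type*} [CommSemiring R] {d : ℕ} (Φ : (Fin d → R) →ₗ[R] R[X])
  (hΦ : ∀ t : Fin d, Φ (Pi.single t 1) = X ^ (t : ℕ))
include hΦ

theorem map_eq_sum_range_smul_X_pow (f : ℕ → R) :
    Φ (fun t => f t) = ∑ t ∈ Finset.range d, f t • (X : R[X]) ^ t := by
  rw [LinearMap.pi_apply_eq_sum_univ, ← Fin.sum_univ_eq_sum_range (fun t => f t • (X : R[X]) ^ t)]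
  refine Finset.sum_congr rfl fun t _ => ?_
  rw [← hΦ t]
  congr 3
  ext s
  simp [Pi.single_apply, eq_comm]

theorem map_allOnes : Φ (fun _ => 1) = ∑ t ∈ Finset.range d, (X : R[X]) ^ t := by
  simpa using map_eq_sum_range_smul_X_pow Φ hΦ (fun _ => 1)

end Identification

theorem map_window_eq_X_pow_mul_geom_sum {d j i : ℕ}
    (Φ : (Fin d → ZMod 2) →ₗ[ZMod 2] (ZMod 2)[X])
    (hΦ : ∀ t : Fin d, Φ (Pi.single t 1) = X ^ (t : ℕ)) (hj : 1 ≤ j) (hijd : i + j ≤ d) :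
    Φ (window d j i) = X ^ i * ∑ k ∈ Finset.range j, X ^ k := by
  have hfilter :
      (Finset.range d).filter (fun t => i ≤ t ∧ t ≤ i + j - 1) = Finset.Ico i (i + j) := by
    ext t
    simp only [Finset.mem_filter, Finset.mem_range, Finset.mem_Ico]
    omega
  unfold window
  rw [map_eq_sum_range_smul_X_pow Φ hΦ (fun t => if i ≤ t ∧ t ≤ i + j - 1 then 1 else 0),
    Finset.mul_sum]
  simp only [ite_smul, one_smul, zero_smul]
  rw [← Finset.sum_filter, hfilter, Finset.sum_Ico_eq_sum_range, Nat.add_sub_cancel_left]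
  simp only [pow_add]

/-- Under any `F₂`-linear identification `Φ` of `(ZMod 2)^d` with polynomials of
degree `< d` sending the `t`-th standard basis vector to `X^t`, the all-ones
vector lies in the span of the window vectors `v_0, …, v_{d-j}` if and only if
`σ_j = 1 + X + ⋯ + X^{j-1}` divides `σ_d = 1 + X + ⋯ + X^{d-1}` in `(ZMod 2)[X]`. -/
theorem allOnes_mem_span_windows_iff_geomSum_dvd (d j : ℕ) (hj : 1 ≤ j) (hjd : j ≤ d)
    (Φ : (Fin d → ZMod 2) →ₗ[ZMod 2] Polynomial (ZMod 2))
    (hΦ : ∀ t : Fin d, Φ (Pi.single t 1) = X ^ (t : ℕ)) :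
    (Φ (fun _ => 1 : Fin d → ZMod 2) ∈
      Submodule.span (ZMod 2) (Φ '' {x : Fin d → ZMod 2 | ∃ i ≤ d - j, x = window d j i})) ↔
    (∑ k ∈ Finset.range j, (X : Polynomial (ZMod 2)) ^ k) ∣
      (∑ k ∈ Finset.range d, (X : Polynomial (ZMod 2)) ^ k) := by
  have hwindows : Φ '' {x : Fin d → ZMod 2 | ∃ i ≤ d - j, x = window d j i} =
      (fun i => X ^ i * ∑ k ∈ Finset.range j, X ^ k) '' Set.Iic (d - j) := by
    ext p
    simp only [Set.mem_image, Set.mem_Iic]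
    constructor
    · rintro ⟨_, ⟨i, hi, rfl⟩, rfl⟩
      exact ⟨i, hi, (map_window_eq_X_pow_mul_geom_sum Φ hΦ hj (by omega)).symm⟩
    · rintro ⟨i, hi, rfl⟩
      exact ⟨window d j i, ⟨i, hi, rfl⟩, map_window_eq_X_pow_mul_geom_sum Φ hΦ hj (by omega)⟩
  rw [map_allOnes Φ hΦ, hwindows, mem_span_X_pow_mul_iff_dvd]
  rw [natDegree_geom_sum_X (by omega), natDegree_geom_sum_X (by omega)]
  omega
end
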